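/- arXiv:1603.09289 — 2 statements merged into one kernel-verified Lean document; each statement's English description precedes it below -/
import Mathlib

section
/- If a sequence of real numbers (r_n) converges to 0 in the classical sense and all but finitely many r_n are strictly positive, then the s-limit of the surreal sign expansions of the r_n is the string +---··· (i.e., one plus followed by ω minuses), which represents the surreal 1/ω. -/
open scoped Classical

noncomputable def slim {L M A : Type*} [LinearOrder L] [LinearOrder M]
    (a : L → M → Option A) : M → Option A := fun m =>
  if h : ∃ l0 : L, ∀ m' ≤ m, ∀ l, l0 ≤ l → ∀ l', l0 ≤ l' →
      a l m' = a l' m' ∧ (a l m').isSome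
  then a h.choose m else none

noncomputable def slimIio {A : Type*} (α : Ordinal) (s : Ordinal → Ordinal → Option A) :
    Ordinal → Option A :=
  slim (L := Set.Iio α) (fun β => s β.1)

abbrev SignStr := Ordinal → Option Bool

def signVal : Option Bool → ℕ
  | none => 1
  | some false => 0
  | some true => 2

def strLT (s t : SignStr) : Prop :=
  ∃ γ, (∀ β < γ, s β = t β) ∧ signVal (s γ) < signVal (t γ)

def strLE (s t : SignStr) : Prop := s = t ∨ strLT s t

noncomputable def ordStr (α : Ordinal) : SignStr := fun γ => if γ < α then some true else none

noncomputable def strLength {A : Type*} (a : Ordinal → Option A) : Ordinal :=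
  sInf {γ | a γ = none}

noncomputable def strAppend {A : Type*} (a b : Ordinal → Option A) : Ordinal → Option A :=
  fun γ => if γ < strLength a then a γ else b (γ - strLength a)

noncomputable def oneOverOmega : SignStr := fun γ =>
  if γ = 0 then some true else if γ < Ordinal.omega0 then some false else none

noncomputable def negOneOverOmega : SignStr := fun γ =>
  if γ = 0 then some false else if γ < Ordinal.omega0 then some true else none

def IsDyadic (x : ℝ) : Prop := ∃ (k : ℤ) (m : ℕ), x = k / 2 ^ m

noncomputable def cand : Option ℝ × Option ℝ → ℝ
  | (none, none) => 0
  | (some l, none) => l + 1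
  | (none, some u) => u - 1
  | (some l, some u) => (l + u) / 2

noncomputable def signState (r : ℝ) : ℕ → Option ℝ × Option ℝ
  | 0 => (none, none)
  | n + 1 =>
      let st := signState r n
      let c := cand st
      if c < r then (some c, st.2)
      else if r < c then (st.1, some c)
      else st

noncomputable def signAt (r : ℝ) (n : ℕ) : Option Bool :=
  let c := cand (signState r n)
  if c < r then some true else if r < c then some false else none

noncomputable def signExp (r : ℝ) : SignStr := fun γ =>
  if h : ∃ n : ℕ, γ = (n : Ordinal) then signAt r h.choose else none

/-! For `0 < x < 2⁻ᵏ` the sign-expansion algorithm first moves right from `0` (a `+`), and then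
keeps bisecting towards `0` from above, producing `-` at every place up to `k + 1`. So for a null
sequence that is eventually positive, each finite initial segment of the sign expansions of `r n`
is eventually that of `+---⋯`, while no expansion of a real has a place `≥ ω`. -/

open Filter Topology Ordinal

section slim

variable {L M A : Type*} [LinearOrder L] [LinearOrder M] {a : L → M → Option A} {m : M}

theorem slim_eq_of_eventually_eq [Nonempty L] {t : M → Option A}
    (h : ∀ᶠ l in atTop, ∀ m' ≤ m, a l m' = t m') (ht : ∀ m' ≤ m, (t m').isSome) :
    slim a m = t m := by
  obtain ⟨l₀, hl₀⟩ := eventually_atTop.mp h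
  have hex : ∃ l0 : L, ∀ m' ≤ m, ∀ l, l0 ≤ l → ∀ l', l0 ≤ l' →
      a l m' = a l' m' ∧ (a l m').isSome :=
    ⟨l₀, fun m' hm' l hl l' hl' => by
      rw [hl₀ l hl m' hm', hl₀ l' hl' m' hm']
      exact ⟨rfl, ht m' hm'⟩⟩
  rw [slim, dif_pos hex]
  calc a hex.choose m = a (max hex.choose l₀) m :=
        (hex.choose_spec m le_rfl _ le_rfl _ (le_max_left _ _)).1
    _ = t m := hl₀ _ (le_max_right _ _) m le_rfl

theorem slim_eq_none (h : ∀ l, a l m = none) : slim a m = none := by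
  rw [slim, dif_neg]
  rintro ⟨l₀, hl₀⟩
  simpa [h] using (hl₀ m le_rfl l₀ le_rfl l₀ le_rfl).2

end slim

section signExp

variable {x : ℝ} {n : ℕ}

theorem signState_succ_of_cand_lt (h : cand (signState x n) < x) :
    signState x (n + 1) = (some (cand (signState x n)), (signState x n).2) := by
  rw [signState]
  exact if_pos h

theorem signState_succ_of_lt_cand (h : x < cand (signState x n)) :
    signState x (n + 1) = ((signState x n).1, some (cand (signState x n))) := by
  rw [signState]
  exact (if_neg h.not_gt).trans (if_pos h)

theorem signAt_of_cand_lt (h : cand (signState x n) < x) : signAt x n = some true :=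
  if_pos h

theorem signAt_of_lt_cand (h : x < cand (signState x n)) : signAt x n = some false :=
  (if_neg h.not_gt).trans (if_pos h)

theorem signState_one_of_pos (hx : 0 < x) : signState x 1 = (some 0, none) :=
  signState_succ_of_cand_lt hx

theorem signState_add_two_of_pos_of_lt (hx : 0 < x) (h : x < (1 / 2) ^ n) :
    signState x (n + 2) = (some 0, some ((1 / 2) ^ n)) := by
  induction n with
  | zero =>
    rw [signState_succ_of_lt_cand] <;> simp_all [signState_one_of_pos hx, cand]
  | succ n ih =>
    have ih := ih (h.trans_le (pow_le_pow_of_le_one (by norm_num) (by norm_num) n.le_succ))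
    have hcand : cand (signState x (n + 2)) = (1 / 2) ^ (n + 1) := by
      rw [ih, cand]
      ring
    rw [signState_succ_of_lt_cand (hcand ▸ h), hcand, ih]

theorem signAt_zero_of_pos (hx : 0 < x) : signAt x 0 = some true :=
  signAt_of_cand_lt hx

theorem signAt_succ_of_pos_of_lt (hx : 0 < x) (h : x < (1 / 2) ^ n) :
    signAt x (n + 1) = some false := by
  apply signAt_of_lt_cand
  cases n with
  | zero => simpa [signState_one_of_pos hx, cand] using h
  | succ n =>
    have h' : x < (1 / 2) ^ n :=
      h.trans_le (pow_le_pow_of_le_one (by norm_num) (by norm_num) n.le_succ)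
    rw [signState_add_two_of_pos_of_lt hx h', cand]
    linarith [pow_succ (1 / 2 : ℝ) n]

theorem signExp_natCast (x : ℝ) (n : ℕ) : signExp x n = signAt x n := by
  have h : ∃ k : ℕ, (n : Ordinal) = k := ⟨n, rfl⟩
  rw [signExp, dif_pos h]
  exact congrArg _ (Nat.cast_injective h.choose_spec).symm

theorem signExp_of_omega0_le {γ : Ordinal} (hγ : ω ≤ γ) : signExp x γ = none := by
  rw [signExp, dif_neg]
  rintro ⟨k, rfl⟩
  exact hγ.not_gt (natCast_lt_omega0 k)

end signExp

section oneOverOmega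

variable {γ : Ordinal}

theorem oneOverOmega_isSome (hγ : γ < ω) : (oneOverOmega γ).isSome := by
  unfold oneOverOmega
  split_ifs <;> rfl

theorem oneOverOmega_of_omega0_le (hγ : ω ≤ γ) : oneOverOmega γ = none := by
  have hγ₀ : γ ≠ 0 := (omega0_pos.trans_le hγ).ne'
  simp [oneOverOmega, hγ₀, hγ.not_gt]

theorem oneOverOmega_natCast_succ (n : ℕ) : oneOverOmega ((n + 1 : ℕ) : Ordinal) = some false := by
  rw [oneOverOmega, if_neg (mod_cast n.succ_ne_zero), if_pos (natCast_lt_omega0 _)]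

theorem signExp_eq_oneOverOmega_of_le {x : ℝ} {k : ℕ} (hx : 0 < x) (h : x < (1 / 2) ^ k)
    (hγ : γ ≤ k) : signExp x γ = oneOverOmega γ := by
  obtain ⟨j, rfl⟩ := lt_omega0.mp (hγ.trans_lt (natCast_lt_omega0 k))
  rw [signExp_natCast]
  cases j with
  | zero => simp [signAt_zero_of_pos hx, oneOverOmega]
  | succ i =>
    have hik : i ≤ k := by exact_mod_cast (Nat.le_succ i).trans (Nat.cast_le.mp hγ)
    rw [oneOverOmega_natCast_succ, signAt_succ_of_pos_of_lt hx
      (h.trans_le (pow_le_pow_of_le_one (by norm_num) (by norm_num) hik))]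

end oneOverOmega

open Filter Topology in
/-- If a sequence of reals converges to 0 and all but finitely many terms are
strictly positive, then the s-limit of their surreal sign expansions is the string
`+---⋯` (one plus followed by ω minuses), i.e. the sign expansion of `1/ω`. -/
theorem slim_signExp_of_tendsto_zero_of_eventually_pos (r : ℕ → ℝ)
    (hconv : Tendsto r atTop (𝓝 0))
    (hpos : ∀ᶠ n in atTop, 0 < r n) :
    slim (fun n => signExp (r n)) = oneOverOmega := by
  funext γ
  rcases lt_or_ge γ ω with hγ | hγ
  · obtain ⟨k, rfl⟩ := lt_omega0.mp hγ
    refine slim_eq_of_eventually_eq ?_ fun β hβ => oneOverOmega_isSome (hβ.trans_lt hγ)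
    filter_upwards [hpos, hconv.eventually_lt_const (pow_pos one_half_pos k)] with n hn hnk
    exact fun β hβ => signExp_eq_oneOverOmega_of_le hn hnk hβ
  · rw [slim_eq_none fun n => signExp_of_omega0_le hγ, oneOverOmega_of_omega0_le hγ]
end

section
/- The s-limit of a nondecreasing ordinal-indexed sequence of surreal numbers is greater than or equal to every element of the sequence. -/
/-!
Let `γ` be the first place where `s β` and the limit `t` differ. If `t γ` is defined, some later
`s l` agrees with `t` up to `γ`, and `s β ≤ s l` gives `s β γ < t γ`. If `t γ` is undefined,
`s β γ` must be `-`: were it `+`, every later string would agree with `s β` up to `γ` (below `γ`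
because it is squeezed between `s β` and a string that has already settled there, at `γ` because
no sign exceeds `+`), so the sequence would settle at `γ` after all.
-/


open scoped Classical

open Set

/-- The condition in the definition of `slim`, at place `m` and from index `l₀` on. -/
def SlimStable {L M A : Type*} [LinearOrder L] [LinearOrder M] (a : L → M → Option A) (m : M)
    (l₀ : L) : Prop :=
  ∀ m' ≤ m, ∀ l, l₀ ≤ l → ∀ l', l₀ ≤ l' → a l m' = a l' m' ∧ (a l m').isSome

section FirstDifference

variable {M X : Type*} [LinearOrder M] [WellFoundedLT M]

theorem exists_eqOn_Iio_ne_of_ne {f g : M → X} {δ : M} (h : f δ ≠ g δ) :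
    ∃ γ ≤ δ, EqOn f g (Iio γ) ∧ f γ ≠ g γ := by
  obtain ⟨γ, hγ, hmin⟩ := wellFounded_lt.has_min {x | f x ≠ g x} ⟨δ, h⟩
  exact ⟨γ, not_lt.1 (hmin δ h), fun x hx => not_not.1 fun hne => hmin x hne hx, hγ⟩

end FirstDifference

section SignStr

variable {a b c : SignStr} {γ : Ordinal}

theorem signVal_lt_of_strLE (h : strLE a b) (heq : EqOn a b (Iio γ)) (hne : a γ ≠ b γ) :
    signVal (a γ) < signVal (b γ) := by
  rcases h with rfl | ⟨γ', heq', hlt⟩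
  · exact absurd rfl hne
  rcases lt_trichotomy γ' γ with hγ' | rfl | hγ'
  · exact absurd (heq hγ' ▸ hlt) (lt_irrefl _)
  · exact hlt
  · exact absurd (heq' γ hγ') hne

theorem strLE_of_signVal_lt
    (h : ∀ γ, EqOn a b (Iio γ) → a γ ≠ b γ → signVal (a γ) < signVal (b γ)) : strLE a b := by
  by_cases hab : a = b
  · exact Or.inl hab
  obtain ⟨δ, hδ⟩ := Function.ne_iff.1 hab
  obtain ⟨γ, -, heq, hne⟩ := exists_eqOn_Iio_ne_of_ne hδ
  exact Or.inr ⟨γ, fun β hβ => heq hβ, h γ heq hne⟩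

theorem eq_some_true_of_strLE (h : strLE a b) (heq : EqOn a b (Iio γ))
    (htop : a γ = some true) : b γ = some true := by
  by_contra hne
  have := signVal_lt_of_strLE h heq (htop ▸ Ne.symm hne)
  rw [htop] at this
  revert hne this
  rcases b γ with _ | _ | _ <;> simp [signVal]

theorem eqOn_Iic_of_strLE_of_strLE (hab : strLE a b) (hbc : strLE b c)
    (hac : EqOn a c (Iic γ)) : EqOn a b (Iic γ) := by
  intro δ hδ
  by_contra hne
  obtain ⟨δ₀, hδ₀, heq, hne₀⟩ := exists_eqOn_Iio_ne_of_ne hne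
  have hδ₀γ : δ₀ ∈ Iic γ := hδ₀.trans hδ
  have hac₀ : EqOn b c (Iio δ₀) := fun x hx =>
    (heq hx).symm.trans (hac (le_of_lt (lt_of_lt_of_le (mem_Iio.1 hx) hδ₀γ)))
  have h₁ := signVal_lt_of_strLE hab heq hne₀
  have h₂ := signVal_lt_of_strLE hbc hac₀ (hac hδ₀γ ▸ Ne.symm hne₀)
  rw [← hac hδ₀γ] at h₂
  exact lt_asymm h₁ h₂

end SignStr

section Slim

variable {L M A : Type*} [LinearOrder L] [LinearOrder M] {a : L → M → Option A} {m : M} {l₀ : L}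

theorem SlimStable.mono (h : SlimStable a m l₀) {m' : M} (hm : m' ≤ m) : SlimStable a m' l₀ :=
  fun m'' hm'' => h m'' (hm''.trans hm)

theorem SlimStable.slim_eq (h : SlimStable a m l₀) {l : L} (hl : l₀ ≤ l) :
    slim a m = a l m := by
  have hex : ∃ l₁, SlimStable a m l₁ := ⟨l₀, h⟩
  have hspec : SlimStable a m hex.choose := hex.choose_spec
  calc slim a m = a hex.choose m := dif_pos hex
    _ = a (max l hex.choose) m := (hspec m le_rfl _ le_rfl _ (le_max_right _ _)).1
    _ = a l m := (h m le_rfl _ (hl.trans (le_max_left _ _)) _ hl).1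

theorem SlimStable.eqOn_slim (h : SlimStable a m l₀) {l : L} (hl : l₀ ≤ l) :
    EqOn (a l) (slim a) (Iic m) := fun _ hm' => ((h.mono hm').slim_eq hl).symm

theorem SlimStable.isSome_slim (h : SlimStable a m l₀) : (slim a m).isSome := by
  rw [h.slim_eq le_rfl]
  exact (h m le_rfl l₀ le_rfl l₀ le_rfl).2

theorem exists_slimStable_of_isSome (h : (slim a m).isSome) : ∃ l₀, SlimStable a m l₀ := by
  by_contra hex
  have hnone : slim a m = none := dif_neg hex
  simp [hnone] at h

end Slim

section Monotone

variable {L : Type*} [LinearOrder L] {a : L → SignStr}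

theorem slimStable_of_eq_some_true (hmono : ∀ l l', l ≤ l' → strLE (a l) (a l')) {l₀ : L}
    (hdef : IsLowerSet {γ | (a l₀ γ).isSome}) {γ : Ordinal} (heq : EqOn (a l₀) (slim a) (Iio γ))
    (htop : a l₀ γ = some true) : SlimStable a γ l₀ := by
  have hdefγ : ∀ δ ≤ γ, (a l₀ δ).isSome := fun δ hδ => hdef hδ (by simp [htop])
  have hlater : ∀ l, l₀ ≤ l → EqOn (a l₀) (a l) (Iic γ) := by
    intro l hl
    have hbelow : EqOn (a l₀) (a l) (Iio γ) := by
      intro δ hδ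
      obtain ⟨w, hw⟩ := exists_slimStable_of_isSome (heq hδ ▸ hdefγ δ (le_of_lt hδ))
      have hsettled : EqOn (a l₀) (a (max l w)) (Iic δ) := fun x hx =>
        (heq (lt_of_le_of_lt (mem_Iic.1 hx) hδ)).trans (hw.eqOn_slim (le_max_right _ _) hx).symm
      exact eqOn_Iic_of_strLE_of_strLE (hmono _ _ hl) (hmono _ _ (le_max_left _ _)) hsettled
        self_mem_Iic
    intro δ hδ
    rcases (mem_Iic.1 hδ).lt_or_eq with hδ | rfl
    · exact hbelow hδ
    · exact htop.trans (eq_some_true_of_strLE (hmono _ _ hl) hbelow htop).symm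
  intro δ hδ l hl l' hl'
  exact ⟨(hlater l hl hδ).symm.trans (hlater l' hl' hδ), (hlater l hl hδ) ▸ hdefγ δ hδ⟩

theorem strLE_slim_of_monotone (hmono : ∀ l l', l ≤ l' → strLE (a l) (a l')) (l₀ : L)
    (hdef : IsLowerSet {γ | (a l₀ γ).isSome}) : strLE (a l₀) (slim a) := by
  refine strLE_of_signVal_lt fun γ heq hne => ?_
  cases hlim : slim a γ with
  | none =>
    cases hγ : a l₀ γ with
    | none => exact absurd (hγ.trans hlim.symm) hne
    | some sign =>
      cases sign with
      | false => simp [signVal]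
      | true =>
        have := (slimStable_of_eq_some_true hmono hdef heq hγ).isSome_slim
        simp [hlim] at this
  | some _ =>
    obtain ⟨w, hw⟩ := exists_slimStable_of_isSome (by simp [hlim] : (slim a γ).isSome)
    have hsettled := hw.eqOn_slim (le_max_right l₀ w)
    have hlt := signVal_lt_of_strLE (hmono _ _ (le_max_left l₀ w))
      (heq.trans (hsettled.mono Iio_subset_Iic_self).symm) (hsettled self_mem_Iic ▸ hne)
    rwa [hsettled self_mem_Iic, hlim] at hlt

end Monotone

/-- The s-limit of a nondecreasing ordinal-indexed sequence of surreal numbers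
(sign expansions) is `≥` every element of the sequence. -/
theorem strLE_slimIio_of_monotone (α : Ordinal) (s : Ordinal → SignStr)
    (hstr : ∀ β < α, IsLowerSet {γ | (s β γ).isSome})
    (hmono : ∀ β γ, β ≤ γ → γ < α → strLE (s β) (s γ)) :
    ∀ β < α, strLE (s β) (slimIio α s) := fun β hβ =>
  strLE_slim_of_monotone (a := fun l : Iio α => s l.1) (fun _ l' h => hmono _ _ h l'.2)
    ⟨β, hβ⟩ (hstr β hβ)
end
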